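/- Let N ≤ s be positive integers, A and C invertible real N×N matrices, and W a real s×N matrix with WᵀW = I_N; set K = AWᵀ. Fix 0 < ρ < 1/2, set τ = (1+2ρ)/(1−2ρ), fix q ∈ (2ρ, 1), and assume ‖(C − A)v‖ ≤ ρ‖Av‖ for all v ∈ ℝ^N. Let μ : [0,∞) → [0,∞) be continuous with μ(0) = 0, and assume that for every δ > 0, ‖CWᵀ(u − S_{μ(δ)}(u))‖ ≤ ρδ for all u ∈ ℝ^s. Let x ∈ ℝ^s, g = Kx, and let z⁰ ∈ ℝ^s be a fixed starting vector that is not a solution of Kz = g. Let (δ_m) be a sequence of positive reals with δ_m → 0, and for each m let g^{δ_m} ∈ ℝ^N satisfy ‖g^{δ_m} − g‖ ≤ δ_m. For each m run the iteration: starting from z⁰ (with threshold μ(δ_m)), while ‖r^n‖ > τδ_m, where r^n = g^{δ_m} − K·S_{μ(δ_m)}(z^n), choose α_n > 0 with α_n‖(CCᵀ + α_n I)⁻¹ r^n‖ = q_n‖r^n‖ for τ_n = ‖r^n‖/δ_m and q_n = max{q, 2ρ + (1+ρ)/τ_n}, and set z^{n+1} = z^n + WCᵀ(CCᵀ + α_n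 I)⁻¹ r^n; let n(δ_m) be the first index with ‖r^{n(δ_m)}‖ ≤ τδ_m. Then the sequence x^{n(δ_m)}_{δ_m} = S_{μ(δ_m)}(z^{n(δ_m)}_{δ_m}) converges, as m → ∞, to the solution of Kz = g that is closest to z⁰ in the Euclidean norm. -/

import Mathlib

open Matrix Filter

/-- Soft-thresholding operator acting componentwise:
`S_μ(u)_i = sgn(u_i) · max(|u_i| − μ, 0)`. -/
noncomputable def soft {s : ℕ} (μ : ℝ) (u : EuclideanSpace ℝ (Fin s)) : EuclideanSpace ℝ (Fin s) :=
  WithLp.toLp 2 (fun i => Real.sign (u i) * max (|u i| - μ) 0)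

/-- Matrix-vector multiplication as a map between Euclidean spaces. -/
noncomputable def mulVecE {m n : ℕ} (A : Matrix (Fin m) (Fin n) ℝ)
    (v : EuclideanSpace ℝ (Fin n)) : EuclideanSpace ℝ (Fin m) :=
  WithLp.toLp 2 (A.mulVec v)

/-- The spectral norm of a real matrix: the operator norm induced by Euclidean vector norms. -/
noncomputable def specNorm {m n : ℕ} (A : Matrix (Fin m) (Fin n) ℝ) : ℝ :=
  ‖(Matrix.toEuclideanLin A).toContinuousLinearMap‖

/-- The ℓ¹-norm of a vector. -/
noncomputable def l1norm {s : ℕ} (u : EuclideanSpace ℝ (Fin s)) : ℝ := ∑ i, |u i|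

/-! The soft-thresholding step moves `z` by at most `√s μ`, and every iterate lies in
`z⁰ + range W`, on which `K = A Wᵀ` is injective since `Wᵀ W = I`. A stopping residual
`‖r‖ ≤ τ δ` therefore pins `Wᵀ z` to within `O(μ(δ) + δ)` of `A⁻¹ g`, and inside `z⁰ + range W`
this is the distance to the point of `{w | K w = g}` nearest to `z⁰`. -/

section MulVecE

variable {m n k : ℕ}

lemma mulVecE_eq_toEuclideanLin (M : Matrix (Fin m) (Fin n) ℝ) :
    mulVecE M = Matrix.toEuclideanLin M :=
  rfl

lemma mulVecE_add (M : Matrix (Fin m) (Fin n) ℝ) (u v : EuclideanSpace ℝ (Fin n)) :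
    mulVecE M (u + v) = mulVecE M u + mulVecE M v := by
  simp only [mulVecE_eq_toEuclideanLin, map_add]

lemma mulVecE_sub (M : Matrix (Fin m) (Fin n) ℝ) (u v : EuclideanSpace ℝ (Fin n)) :
    mulVecE M (u - v) = mulVecE M u - mulVecE M v := by
  simp only [mulVecE_eq_toEuclideanLin, map_sub]

lemma mulVecE_mul (M : Matrix (Fin m) (Fin n) ℝ) (P : Matrix (Fin n) (Fin k) ℝ)
    (v : EuclideanSpace ℝ (Fin k)) : mulVecE (M * P) v = mulVecE M (mulVecE P v) := by
  simp only [mulVecE, WithLp.ofLp_toLp, Matrix.mulVec_mulVec]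

lemma mulVecE_one (v : EuclideanSpace ℝ (Fin n)) : mulVecE 1 v = v := by
  simp [mulVecE]

lemma inner_mulVecE (M : Matrix (Fin m) (Fin n) ℝ) (u : EuclideanSpace ℝ (Fin m))
    (v : EuclideanSpace ℝ (Fin n)) :
    inner ℝ u (mulVecE M v) = inner ℝ (mulVecE Mᵀ u) v := by
  rw [← conjTranspose_eq_transpose_of_trivial, mulVecE_eq_toEuclideanLin,
    mulVecE_eq_toEuclideanLin, toEuclideanLin_conjTranspose_eq_adjoint,
    LinearMap.adjoint_inner_left]

lemma norm_mulVecE_le (M : Matrix (Fin m) (Fin n) ℝ) (v : EuclideanSpace ℝ (Fin n)) :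
    ‖mulVecE M v‖ ≤ specNorm M * ‖v‖ :=
  (Matrix.toEuclideanLin M).toContinuousLinearMap.le_opNorm v

lemma specNorm_nonneg (M : Matrix (Fin m) (Fin n) ℝ) : 0 ≤ specNorm M :=
  norm_nonneg _

lemma mulVecE_mul_eq_iff {A : Matrix (Fin m) (Fin m) ℝ} (hA : IsUnit A)
    (M : Matrix (Fin m) (Fin n) ℝ) (w : EuclideanSpace ℝ (Fin n)) (g : EuclideanSpace ℝ (Fin m)) :
    mulVecE (A * M) w = g ↔ mulVecE M w = mulVecE A⁻¹ g := by
  have hdet := (isUnit_iff_isUnit_det A).mp hA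
  constructor
  · rintro rfl
    rw [← mulVecE_mul, ← Matrix.mul_assoc, nonsing_inv_mul A hdet, Matrix.one_mul]
  · intro h
    rw [mulVecE_mul, h, ← mulVecE_mul, mul_nonsing_inv A hdet, mulVecE_one]

lemma norm_mulVecE_sub_inv_le {A : Matrix (Fin m) (Fin m) ℝ} (hA : IsUnit A)
    (M : Matrix (Fin m) (Fin n) ℝ) (w : EuclideanSpace ℝ (Fin n)) (g : EuclideanSpace ℝ (Fin m)) :
    ‖mulVecE M w - mulVecE A⁻¹ g‖ ≤ specNorm A⁻¹ * ‖mulVecE (A * M) w - g‖ := by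
  have hM : mulVecE M w = mulVecE A⁻¹ (mulVecE (A * M) w) :=
    (mulVecE_mul_eq_iff hA M w _).1 rfl
  rw [hM, ← mulVecE_sub]
  exact norm_mulVecE_le _ _

end MulVecE

section Isometry

variable {s N : ℕ} {W : Matrix (Fin s) (Fin N) ℝ}

/-- For `Wᵀ W = I`, `W Wᵀ` is the orthogonal projection onto `range W`, so this is the point of
`{w | Wᵀ w = b}` nearest to `z₀`. -/
noncomputable def closestPoint (W : Matrix (Fin s) (Fin N) ℝ) (b : EuclideanSpace ℝ (Fin N))
    (z₀ : EuclideanSpace ℝ (Fin s)) : EuclideanSpace ℝ (Fin s) :=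
  z₀ + mulVecE W (b - mulVecE Wᵀ z₀)

lemma mulVecE_transpose_mulVecE (hW : Wᵀ * W = 1) (c : EuclideanSpace ℝ (Fin N)) :
    mulVecE Wᵀ (mulVecE W c) = c := by
  rw [← mulVecE_mul, hW, mulVecE_one]

lemma norm_mulVecE_of_transpose_mul_eq_one (hW : Wᵀ * W = 1) (c : EuclideanSpace ℝ (Fin N)) :
    ‖mulVecE W c‖ = ‖c‖ := by
  have h : ‖mulVecE W c‖ ^ 2 = ‖c‖ ^ 2 := by
    rw [← real_inner_self_eq_norm_sq, ← real_inner_self_eq_norm_sq, inner_mulVecE,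
      mulVecE_transpose_mulVecE hW]
  exact (sq_eq_sq₀ (norm_nonneg _) (norm_nonneg _)).1 h

lemma mulVecE_transpose_closestPoint (hW : Wᵀ * W = 1) (b : EuclideanSpace ℝ (Fin N))
    (z₀ : EuclideanSpace ℝ (Fin s)) : mulVecE Wᵀ (closestPoint W b z₀) = b := by
  rw [closestPoint, mulVecE_add, mulVecE_transpose_mulVecE hW, add_sub_cancel]

lemma norm_closestPoint_sub_le (hW : Wᵀ * W = 1) {b : EuclideanSpace ℝ (Fin N)}
    (z₀ : EuclideanSpace ℝ (Fin s)) {w : EuclideanSpace ℝ (Fin s)} (hw : mulVecE Wᵀ w = b) :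
    ‖closestPoint W b z₀ - z₀‖ ≤ ‖w - z₀‖ := by
  set p := closestPoint W b z₀
  have horth : inner ℝ (w - p) (p - z₀) = 0 := by
    rw [show p - z₀ = mulVecE W (b - mulVecE Wᵀ z₀) from add_sub_cancel_left _ _,
      inner_mulVecE, mulVecE_sub, hw, mulVecE_transpose_closestPoint hW, sub_self,
      inner_zero_left]
  have hpyth := norm_add_sq_eq_norm_sq_add_norm_sq_real horth
  rw [sub_add_sub_cancel] at hpyth
  exact (mul_self_le_mul_self_iff (norm_nonneg _) (norm_nonneg _)).2
    (by nlinarith [mul_self_nonneg ‖w - p‖])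

lemma norm_add_mulVecE_sub_closestPoint (hW : Wᵀ * W = 1) (b : EuclideanSpace ℝ (Fin N))
    (z₀ : EuclideanSpace ℝ (Fin s)) (c : EuclideanSpace ℝ (Fin N)) :
    ‖z₀ + mulVecE W c - closestPoint W b z₀‖ = ‖mulVecE Wᵀ (z₀ + mulVecE W c) - b‖ := by
  rw [closestPoint, add_sub_add_left_eq_sub, ← mulVecE_sub,
    norm_mulVecE_of_transpose_mul_eq_one hW, mulVecE_add, mulVecE_transpose_mulVecE hW]
  congr 1
  abel

end Isometry

lemma exists_eq_add_mulVecE_of_forall_lt {s N : ℕ} (W : Matrix (Fin s) (Fin N) ℝ)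
    {z : ℕ → EuclideanSpace ℝ (Fin s)} {n₀ : ℕ}
    (hz : ∀ n < n₀, ∃ c, z (n + 1) = z n + mulVecE W c) :
    ∀ n ≤ n₀, ∃ c, z n = z 0 + mulVecE W c := by
  intro n
  induction n with
  | zero => exact fun _ => ⟨0, by rw [mulVecE_eq_toEuclideanLin, map_zero, add_zero]⟩
  | succ n ih =>
    intro hn
    obtain ⟨c, hc⟩ := ih (Nat.le_of_succ_le hn)
    obtain ⟨d, hd⟩ := hz n hn
    exact ⟨c + d, by rw [hd, hc, mulVecE_add, add_assoc]⟩

lemma abs_sign_mul_max_sub_le (μ t : ℝ) (hμ : 0 ≤ μ) :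
    |Real.sign t * max (|t| - μ) 0 - t| ≤ μ := by
  rcases le_or_gt |t| μ with h | h
  · rwa [max_eq_right (by linarith), mul_zero, zero_sub, abs_neg]
  · rw [max_eq_left (sub_nonneg.2 h.le)]
    rcases lt_trichotomy t 0 with ht | rfl | ht
    · rw [Real.sign_of_neg ht, abs_of_neg ht, show -1 * (-t - μ) - t = μ by ring, abs_of_nonneg hμ]
    · simp [hμ]
    · rw [Real.sign_of_pos ht, abs_of_pos ht, show 1 * (t - μ) - t = -μ by ring, abs_neg,
        abs_of_nonneg hμ]

lemma norm_soft_sub_le {s : ℕ} {μ : ℝ} (hμ : 0 ≤ μ) (u : EuclideanSpace ℝ (Fin s)) :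
    ‖soft μ u - u‖ ≤ Real.sqrt s * μ := by
  have hcoord : ∀ i, ‖(soft μ u - u) i‖ ^ 2 ≤ μ ^ 2 := fun i =>
    pow_le_pow_left₀ (norm_nonneg _) (abs_sign_mul_max_sub_le μ (u i) hμ) 2
  calc ‖soft μ u - u‖ = Real.sqrt (∑ i, ‖(soft μ u - u) i‖ ^ 2) := EuclideanSpace.norm_eq _
    _ ≤ Real.sqrt (∑ _i : Fin s, μ ^ 2) := Real.sqrt_le_sqrt (Finset.sum_le_sum fun i _ => hcoord i)
    _ = Real.sqrt s * μ := by
        rw [Finset.sum_const, Finset.card_univ, Fintype.card_fin, nsmul_eq_mul,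
          Real.sqrt_mul (Nat.cast_nonneg _), Real.sqrt_sq hμ]

lemma norm_soft_sub_closestPoint_le {s N : ℕ} {W : Matrix (Fin s) (Fin N) ℝ} (hW : Wᵀ * W = 1)
    {A : Matrix (Fin N) (Fin N) ℝ} (hA : IsUnit A) {μ : ℝ} (hμ : 0 ≤ μ)
    (g : EuclideanSpace ℝ (Fin N)) (z₀ : EuclideanSpace ℝ (Fin s)) (c : EuclideanSpace ℝ (Fin N)) :
    ‖soft μ (z₀ + mulVecE W c) - closestPoint W (mulVecE A⁻¹ g) z₀‖ ≤
      (1 + specNorm Wᵀ) * (Real.sqrt s * μ) +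
        specNorm A⁻¹ * ‖mulVecE (A * Wᵀ) (soft μ (z₀ + mulVecE W c)) - g‖ := by
  set z := z₀ + mulVecE W c
  set x := soft μ z
  have hxz : ‖x - z‖ ≤ Real.sqrt s * μ := norm_soft_sub_le hμ z
  calc ‖x - closestPoint W (mulVecE A⁻¹ g) z₀‖
      ≤ ‖x - z‖ + ‖z - closestPoint W (mulVecE A⁻¹ g) z₀‖ := norm_sub_le_norm_sub_add_norm_sub _ _ _
    _ = ‖x - z‖ + ‖mulVecE Wᵀ (z - x) + (mulVecE Wᵀ x - mulVecE A⁻¹ g)‖ := by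
        rw [norm_add_mulVecE_sub_closestPoint hW, mulVecE_sub, sub_add_sub_cancel]
    _ ≤ ‖x - z‖ + (specNorm Wᵀ * ‖x - z‖ + specNorm A⁻¹ * ‖mulVecE (A * Wᵀ) x - g‖) := by
        gcongr
        refine (norm_add_le _ _).trans (add_le_add ?_ (norm_mulVecE_sub_inv_le hA _ _ _))
        rw [← norm_sub_rev]
        exact norm_mulVecE_le _ _
    _ ≤ _ := by
        have := mul_le_mul_of_nonneg_left hxz (specNorm_nonneg Wᵀ)
        linarith

theorem stmt17_general {N s : ℕ}
    (A C : Matrix (Fin N) (Fin N) ℝ) (hA : IsUnit A)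
    (W : Matrix (Fin s) (Fin N) ℝ)
    (hW : Wᵀ * W = (1 : Matrix (Fin N) (Fin N) ℝ))
    (ρ : ℝ)
    (μ : ℝ → ℝ) (hμcont : ContinuousOn μ (Set.Ici (0 : ℝ))) (hμ0 : μ 0 = 0)
    (hμnn : ∀ t : ℝ, 0 ≤ t → 0 ≤ μ t)
    (x : EuclideanSpace ℝ (Fin s))
    (z0 : EuclideanSpace ℝ (Fin s))
    (δm : ℕ → ℝ) (hδpos : ∀ m, 0 < δm m) (hδto : Tendsto δm atTop (nhds 0))
    (gδ : ℕ → EuclideanSpace ℝ (Fin N))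
    (hgδ : ∀ m, ‖gδ m - mulVecE (A * Wᵀ) x‖ ≤ δm m)
    (z : ℕ → ℕ → EuclideanSpace ℝ (Fin s)) (r : ℕ → ℕ → EuclideanSpace ℝ (Fin N))
    (αs : ℕ → ℕ → ℝ) (nstop : ℕ → ℕ)
    (hz0 : ∀ m, z m 0 = z0)
    (hrdef : ∀ m n, r m n = gδ m - mulVecE (A * Wᵀ) (soft (μ (δm m)) (z m n)))
    (hstep : ∀ m, ∀ n < nstop m, z m (n + 1) =
      z m n + mulVecE (W * Cᵀ * (C * Cᵀ + αs m n • (1 : Matrix (Fin N) (Fin N) ℝ))⁻¹) (r m n))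
    (hstop : ∀ m, ‖r m (nstop m)‖ ≤ ((1 + 2 * ρ) / (1 - 2 * ρ)) * δm m) :
    ∃ zstar : EuclideanSpace ℝ (Fin s),
      mulVecE (A * Wᵀ) zstar = mulVecE (A * Wᵀ) x ∧
      (∀ w : EuclideanSpace ℝ (Fin s),
        mulVecE (A * Wᵀ) w = mulVecE (A * Wᵀ) x → ‖zstar - z0‖ ≤ ‖w - z0‖) ∧
      Tendsto (fun m => soft (μ (δm m)) (z m (nstop m))) atTop (nhds zstar) := by
  set g := mulVecE (A * Wᵀ) x
  set τ := (1 + 2 * ρ) / (1 - 2 * ρ)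
  refine ⟨closestPoint W (mulVecE A⁻¹ g) z0,
    (mulVecE_mul_eq_iff hA _ _ _).2 (mulVecE_transpose_closestPoint hW _ _),
    fun w hw => norm_closestPoint_sub_le hW z0 ((mulVecE_mul_eq_iff hA _ _ _).1 hw), ?_⟩
  have hμδ : Tendsto (fun m => μ (δm m)) atTop (nhds 0) :=
    hμ0 ▸ (hμcont 0 Set.self_mem_Ici).tendsto.comp
      (tendsto_nhdsWithin_iff.2 ⟨hδto, .of_forall fun m => (hδpos m).le⟩)
  have hmem : ∀ m, ∃ c, z m (nstop m) = z0 + mulVecE W c := fun m =>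
    hz0 m ▸ exists_eq_add_mulVecE_of_forall_lt W (fun n hn => ⟨_, by
      rw [hstep m n hn, Matrix.mul_assoc, mulVecE_mul]⟩) _ le_rfl
  have hres : ∀ m, ‖mulVecE (A * Wᵀ) (soft (μ (δm m)) (z m (nstop m))) - g‖ ≤ (1 + τ) * δm m :=
    fun m => calc _ = ‖(gδ m - g) - r m (nstop m)‖ := by rw [hrdef]; congr 1; abel
      _ ≤ δm m + τ * δm m := (norm_sub_le _ _).trans (add_le_add (hgδ m) (hstop m))
      _ = (1 + τ) * δm m := by ring
  have hlim : Tendsto (fun m => (1 + specNorm Wᵀ) * (Real.sqrt s * μ (δm m)) +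
      specNorm A⁻¹ * ((1 + τ) * δm m)) atTop (nhds 0) := by
    simpa using ((hμδ.const_mul _).const_mul _).add ((hδto.const_mul _).const_mul _)
  rw [tendsto_iff_norm_sub_tendsto_zero]
  refine squeeze_zero (fun _ => norm_nonneg _) (fun m => ?_) hlim
  obtain ⟨c, hc⟩ := hmem m
  have hbound := norm_soft_sub_closestPoint_le hW hA (hμnn _ (hδpos m).le) g z0 c
  rw [← hc] at hbound
  exact hbound.trans (add_le_add_right (mul_le_mul_of_nonneg_left (hres m) (specNorm_nonneg _)) _)

/-- Theorem 5 of the paper (convergence and regularization of Algorithm 4--NS):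
as the noise levels `δ_m → 0`, the outputs `x^{n(δ_m)}_{δ_m} = S_{μ(δ_m)}(z^{n(δ_m)}_{δ_m})`
of the nonstationary preconditioned iteration, stopped by the discrepancy principle,
converge to the solution of `Kz = g` closest to the starting vector `z⁰`. -/
theorem stmt17 {N s : ℕ} (hN : 0 < N) (hs : 0 < s) (hNs : N ≤ s)
    (A C : Matrix (Fin N) (Fin N) ℝ) (hA : IsUnit A) (hCinv : IsUnit C)
    (W : Matrix (Fin s) (Fin N) ℝ)
    (hW : Wᵀ * W = (1 : Matrix (Fin N) (Fin N) ℝ))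
    (ρ : ℝ) (hρ0 : 0 < ρ) (hρ1 : ρ < 1 / 2)
    (q : ℝ) (hq0 : 2 * ρ < q) (hq1 : q < 1)
    (hi : ∀ v : EuclideanSpace ℝ (Fin N), ‖mulVecE (C - A) v‖ ≤ ρ * ‖mulVecE A v‖)
    (μ : ℝ → ℝ) (hμcont : ContinuousOn μ (Set.Ici (0 : ℝ))) (hμ0 : μ 0 = 0)
    (hμnn : ∀ t : ℝ, 0 ≤ t → 0 ≤ μ t)
    (hii : ∀ δ' : ℝ, 0 < δ' → ∀ u : EuclideanSpace ℝ (Fin s),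
      ‖mulVecE (C * Wᵀ) (u - soft (μ δ') u)‖ ≤ ρ * δ')
    (x : EuclideanSpace ℝ (Fin s))
    (z0 : EuclideanSpace ℝ (Fin s)) (hz0ns : mulVecE (A * Wᵀ) z0 ≠ mulVecE (A * Wᵀ) x)
    (δm : ℕ → ℝ) (hδpos : ∀ m, 0 < δm m) (hδto : Tendsto δm atTop (nhds 0))
    (gδ : ℕ → EuclideanSpace ℝ (Fin N))
    (hgδ : ∀ m, ‖gδ m - mulVecE (A * Wᵀ) x‖ ≤ δm m)
    (z : ℕ → ℕ → EuclideanSpace ℝ (Fin s)) (r : ℕ → ℕ → EuclideanSpace ℝ (Fin N))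
    (αs : ℕ → ℕ → ℝ) (nstop : ℕ → ℕ)
    (hz0 : ∀ m, z m 0 = z0)
    (hrdef : ∀ m n, r m n = gδ m - mulVecE (A * Wᵀ) (soft (μ (δm m)) (z m n)))
    (hbig : ∀ m, ∀ n < nstop m, ‖r m n‖ > ((1 + 2 * ρ) / (1 - 2 * ρ)) * δm m)
    (hαpos : ∀ m, ∀ n < nstop m, 0 < αs m n)
    (hαeq : ∀ m, ∀ n < nstop m,
      αs m n * ‖mulVecE (C * Cᵀ + αs m n • (1 : Matrix (Fin N) (Fin N) ℝ))⁻¹ (r m n)‖ =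
        max q (2 * ρ + (1 + ρ) / (‖r m n‖ / δm m)) * ‖r m n‖)
    (hstep : ∀ m, ∀ n < nstop m, z m (n + 1) =
      z m n + mulVecE (W * Cᵀ * (C * Cᵀ + αs m n • (1 : Matrix (Fin N) (Fin N) ℝ))⁻¹) (r m n))
    (hstop : ∀ m, ‖r m (nstop m)‖ ≤ ((1 + 2 * ρ) / (1 - 2 * ρ)) * δm m) :
    ∃ zstar : EuclideanSpace ℝ (Fin s),
      mulVecE (A * Wᵀ) zstar = mulVecE (A * Wᵀ) x ∧
      (∀ w : EuclideanSpace ℝ (Fin s),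
        mulVecE (A * Wᵀ) w = mulVecE (A * Wᵀ) x → ‖zstar - z0‖ ≤ ‖w - z0‖) ∧
      Tendsto (fun m => soft (μ (δm m)) (z m (nstop m))) atTop (nhds zstar) :=
  stmt17_general A C hA W hW ρ μ hμcont hμ0 hμnn x z0 δm hδpos hδto gδ hgδ z r αs nstop hz0 hrdef
    hstep hstop
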